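/- For all nonnegative integers n and j, the Chebyshev-Stirling number of the second kind satisfies {n brace j}_{1/2} = (1/(2j)!) Σ_{r=0}^{2j} (-1)^r C(2j,r) (j-r)^{2n}. -/

import Mathlib

/-!
Both sides satisfy the defining recurrence after multiplying by `(2j)!`. For the alternating sum
this rests on `(j + 1 - r)² = (j + 1)² - r (2j + 2 - r)` together with
`r (2j + 2 - r) C(2j+2, r) = (2j + 2)(2j + 1) C(2j, r - 1)`: the first part gives
`(j + 1)²` times the sum for `(n, j + 1)`, the second, after the shift `r ↦ r - 1`,
`(2j + 2)(2j + 1)` times the sum for `(n, j)`.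
-/

noncomputable def CS : ℕ → ℕ → ℝ
  | 0, 0 => 1
  | 0, _ + 1 => 0
  | _ + 1, 0 => 0
  | n + 1, j + 1 => CS n j + ((j:ℝ) + 1) ^ 2 * CS n (j + 1)

open Finset

section CentralDifference

variable (R : Type*) [CommRing R]

noncomputable def centralDiffSum (n j : ℕ) : R :=
  ∑ r ∈ range (2 * j + 1), (-1 : R) ^ r * (2 * j).choose r * ((j : R) - r) ^ (2 * n)

theorem centralDiffSum_zero_zero : centralDiffSum R 0 0 = 1 := by
  simp [centralDiffSum]

theorem centralDiffSum_succ_zero (n : ℕ) : centralDiffSum R (n + 1) 0 = 0 := by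
  simp [centralDiffSum]

theorem centralDiffSum_zero_succ (j : ℕ) : centralDiffSum R 0 (j + 1) = 0 := by
  have h := congrArg (Int.cast : ℤ → R)
    (Int.alternating_sum_range_choose_of_ne (n := 2 * (j + 1)) (by omega))
  push_cast at h
  simpa [centralDiffSum] using h

theorem Nat.choose_succ_mul_succ_mul_sub (m s : ℕ) :
    (m + 2).choose (s + 1) * (s + 1) * (m + 1 - s) = (m + 2) * (m + 1) * m.choose s := by
  rw [← Nat.add_one_mul_choose_eq, mul_assoc, ← Nat.choose_mul_succ_eq]
  ring

theorem Nat.cast_choose_succ_mul_succ_mul_sub {m s : ℕ} (hs : s ≤ m + 1) :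
    ((m + 2).choose (s + 1) : R) * (s + 1) * (m + 1 - s) = (m + 2) * (m + 1) * m.choose s := by
  have h := congrArg (Nat.cast : ℕ → R) (Nat.choose_succ_mul_succ_mul_sub m s)
  push_cast [hs] at h
  exact h

variable {R}

theorem centralDiffSum_succ_succ (n j : ℕ) :
    centralDiffSum R (n + 1) (j + 1) =
      (2 * j + 2) * (2 * j + 1) * centralDiffSum R n j
        + ((j : R) + 1) ^ 2 * centralDiffSum R n (j + 1) := by
  set term : ℕ → R := fun r ↦ (-1 : R) ^ r * (2 * j + 2).choose r * ((j : R) + 1 - r) ^ (2 * n)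
  have hsplit : centralDiffSum R (n + 1) (j + 1) =
      ((j : R) + 1) ^ 2 * centralDiffSum R n (j + 1)
        - ∑ r ∈ range (2 * j + 2 + 1), (r : R) * (2 * j + 2 - r) * term r := by
    rw [centralDiffSum, centralDiffSum, show 2 * (j + 1) = 2 * j + 2 by ring, mul_sum,
      ← sum_sub_distrib]
    refine sum_congr rfl fun r _ ↦ ?_
    simp only [term]
    push_cast
    ring
  have hshift : ∑ r ∈ range (2 * j + 2 + 1), (r : R) * (2 * j + 2 - r) * term r =
      -((2 * j + 2) * (2 * j + 1) * centralDiffSum R n j) := by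
    rw [sum_range_succ', sum_range_succ, centralDiffSum, mul_sum, ← sum_neg_distrib]
    have hlast : ((2 * j + 1 + 1 : ℕ) : R) * (2 * j + 2 - (2 * j + 1 + 1 : ℕ)) = 0 := by
      push_cast; ring
    rw [hlast, Nat.cast_zero, zero_mul, zero_mul, zero_mul, add_zero, add_zero]
    refine sum_congr rfl fun s hs ↦ ?_
    have hcoeff := Nat.cast_choose_succ_mul_succ_mul_sub R (m := 2 * j) (s := s)
      (by rw [mem_range] at hs; omega)
    simp only [term]
    push_cast at hcoeff ⊢
    linear_combination (-(-1 : R) ^ s * ((j : R) - s) ^ (2 * n)) * hcoeff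
  rw [hsplit, hshift]
  ring

end CentralDifference

theorem factorial_mul_CS (n j : ℕ) :
    ((2 * j).factorial : ℝ) * CS n j = centralDiffSum ℝ n j := by
  induction n generalizing j with
  | zero =>
    cases j with
    | zero => simp [CS, centralDiffSum_zero_zero]
    | succ j => simp [CS, centralDiffSum_zero_succ]
  | succ n ih =>
    cases j with
    | zero => simp [CS, centralDiffSum_succ_zero]
    | succ j =>
      have hfac : ((2 * (j + 1)).factorial : ℝ) = (2 * j + 2) * (2 * j + 1) * (2 * j).factorial := by
        rw [show 2 * (j + 1) = 2 * j + 1 + 1 by ring, Nat.factorial_succ, Nat.factorial_succ]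
        push_cast; ring
      rw [centralDiffSum_succ_succ, ← ih, ← ih, CS, hfac]
      ring

theorem cs_single_sum (n j : ℕ) :
    CS n j = (1 / (Nat.factorial (2 * j) : ℝ)) *
      ∑ r ∈ Finset.range (2 * j + 1),
        (-1 : ℝ) ^ r * (Nat.choose (2 * j) r) * ((j : ℝ) - r) ^ (2 * n) := by
  rw [← centralDiffSum, ← factorial_mul_CS]
  field_simp
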